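/- If M has a dominating Markov chain with c < ∞, then for every x_0 ∈ K the sequence of probability measures (α^{x_0}_n)_{n∈ℕ} on N given by α^{x_0}_n({j}) := (1/n)·Σ_{k=1}^n ((U*)^k δ_{x_0})(K_j) is uniformly tight, i.e. for every ε > 0 there exists a finite set V ⊂ N with α^{x_0}_n(N\V) < ε for all n ∈ ℕ. -/

import Mathlib

open MeasureTheory Filter Topology
open scoped ENNReal NNReal Classical

noncomputable section

/-- A countable Markov system `(K_{i(e)}, w_e, p_e)_{e ∈ E}` on a metric space `K`:
a partition `(K_j)_{j ∈ N}` of `K` into nonempty Borel sets, source and target maps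
`i, t : E → N` (`i` surjective), and for each `e ∈ E` Borel maps `w_e` and probability
functions `p_e` (extended by zero outside `K_{i(e)}`) with
`∑_{e, i(e)=j} p_e(y) = 1` for `y ∈ K_j`. -/
structure MarkovSystem (K : Type*) [MetricSpace K] [MeasurableSpace K]
    (N : Type*) (E : Type*) where
  Kset : N → Set K
  Kset_nonempty : ∀ j, (Kset j).Nonempty
  Kset_measurable : ∀ j, MeasurableSet (Kset j)
  Kset_disjoint : Pairwise (Function.onFun Disjoint Kset)
  Kset_cover : (⋃ j, Kset j) = Set.univ
  i : E → N
  t : E → N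
  i_surj : Function.Surjective i
  w : E → K → K
  p : E → K → ℝ
  w_measurable : ∀ e, Measurable (w e)
  p_measurable : ∀ e, Measurable (p e)
  p_nonneg : ∀ e x, 0 ≤ p e x
  p_le_one : ∀ e x, p e x ≤ 1
  p_zero_outside : ∀ e x, x ∉ Kset (i e) → p e x = 0
  w_mapsTo : ∀ e, Set.MapsTo (w e) (Kset (i e)) (Kset (t e))
  p_pos_somewhere : ∀ e, ∃ x ∈ Kset (i e), 0 < p e x
  p_tsum_one : ∀ j, ∀ x ∈ Kset j, (∑' e : {e : E // i e = j}, p e.val x) = 1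

/-- `Ē = E ∪ {∞}` (one-point compactification); with `E` countable its Borel σ-algebra
consists of all subsets. -/
instance optionMeasurableSpace (E : Type*) : MeasurableSpace (Option E) := ⊤

/-- The code space `Σ̄ = Ē^ℤ`, carrying the product σ-algebra. -/
abbrev CodeSpace (E : Type*) : Type _ := ℤ → Option E

/-- The left shift `S` on the code space, `(Sσ)_{k-1} = σ_k`. -/
def shiftMap (E : Type*) : CodeSpace E → CodeSpace E := fun σ k => σ (k + 1)

/-- The cylinder set `_m[es₀, …, es_{n}] = {σ : σ_{m+k} = es_k}`. -/
def cylSetL {E : Type*} (m : ℤ) (es : List (Option E)) : Set (CodeSpace E) :=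
  {σ | ∀ (k : ℕ) (h : k < es.length), σ (m + (k : ℤ)) = es.get ⟨k, h⟩}

/-- The σ-algebra `𝓕` generated by the cylinder sets `_m[e_m, …, e_0]`, `m ≤ 0`. -/
def pastAlgebra (E : Type*) : MeasurableSpace (CodeSpace E) :=
  MeasurableSpace.generateFrom
    {A | ∃ es : List (Option E), es ≠ [] ∧ A = cylSetL (1 - (es.length : ℤ)) es}

/-- The conditional entropy `h_S(Λ) = H_Λ((_1[e])_{e ∈ Ē} | 𝓕)`. -/
def entropyS {E : Type*} (Λ : Measure (CodeSpace E)) : ℝ≥0∞ :=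
  ∑' eo : Option E,
    ∫⁻ σ, ENNReal.ofReal
        (Real.negMulLog
          ((Λ[Set.indicator {τ : CodeSpace E | τ 1 = eo} (fun _ => (1 : ℝ)) | pastAlgebra E]) σ)) ∂Λ

namespace MarkovSystem

variable {K : Type*} [MetricSpace K] [MeasurableSpace K] {N E : Type*}

/-- The Markov operator `Uf = ∑_e p_e · (f ∘ w_e)` acting on nonnegative Borel functions. -/
def markovOp (M : MarkovSystem K N E) (f : K → ℝ≥0∞) : K → ℝ≥0∞ :=
  fun x => ∑' e : E, ENNReal.ofReal (M.p e x) * f (M.w e x)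

/-- The adjoint operator `U*` acting on measures, `(U*ν)(B) = ∫ U(1_B) dν`. -/
def adjOp (M : MarkovSystem K N E) (ν : Measure K) : Measure K :=
  Measure.sum fun e : E =>
    Measure.map (M.w e) (ν.withDensity fun x => ENNReal.ofReal (M.p e x))

/-- `μ ∈ P(M)`: `μ` is an invariant Borel probability measure, `U*μ = μ`. -/
def IsInvariantMeasure (M : MarkovSystem K N E) (μ : Measure K) : Prop :=
  IsProbabilityMeasure μ ∧ M.adjOp μ = μ

/-- The path space `Σ_G`: all coordinates lie in `E` and `i(σ_{n+1}) = t(σ_n)`. -/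
def pathSpace (M : MarkovSystem K N E) : Set (CodeSpace E) :=
  {σ | ∀ n : ℤ, ∃ e e' : E, σ n = some e ∧ σ (n + 1) = some e' ∧ M.i e' = M.t e}

/-- `T_j = {σ ∈ Σ_G : t(σ_0) = j}`. -/
def Tset (M : MarkovSystem K N E) (j : N) : Set (CodeSpace E) :=
  {σ | σ ∈ M.pathSpace ∧ ∃ e : E, σ 0 = some e ∧ M.t e = j}

/-- `w` extended to `Ē`, with `w_∞ = id`. -/
def wext (M : MarkovSystem K N E) : Option E → K → K := fun o => o.elim id M.w

/-- `p` extended to `Ē`, with `p_∞ = 0`. -/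
def pext (M : MarkovSystem K N E) : Option E → K → ℝ := fun o => o.elim (fun _ => 0) M.p

/-- `i` extended to `Ē`, with `i(∞) = j₀`. -/
def iext (M : MarkovSystem K N E) (j0 : N) : Option E → N := fun o => o.elim j0 M.i

/-- `t` extended to `Ē`, with `t(∞) = j₀`. -/
def text (M : MarkovSystem K N E) (j0 : N) : Option E → N := fun o => o.elim j0 M.t

/-- `iterW M σ n y = w_{σ_0} ∘ w_{σ_{-1}} ∘ ⋯ ∘ w_{σ_{-n}} (y)`. -/
def iterW (M : MarkovSystem K N E) (σ : CodeSpace E) : ℕ → K → K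
  | 0, y => M.wext (σ 0) y
  | n + 1, y => M.iterW σ n (M.wext (σ (-(n + 1 : ℤ))) y)

/-- `orbit M j0 xp σ n = w_{σ_0} ∘ ⋯ ∘ w_{σ_{-n}} (x_{i(σ_{-n})})`. -/
def orbit (M : MarkovSystem K N E) (j0 : N) (xp : N → K) (σ : CodeSpace E) (n : ℕ) : K :=
  M.iterW σ n (xp (M.iext j0 (σ (-(n : ℤ)))))

/-- `D`: the set of `σ ∈ Σ_G` for which `lim_{m → -∞} w_{σ_0} ∘ ⋯ ∘ w_{σ_m}(x_{i(σ_m)})` exists. -/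
def codeDomain (M : MarkovSystem K N E) (j0 : N) (xp : N → K) : Set (CodeSpace E) :=
  {σ | σ ∈ M.pathSpace ∧ ∃ l : K, Tendsto (fun n : ℕ => M.orbit j0 xp σ n) atTop (𝓝 l)}

/-- The coding map `F`: the above limit on `D`, and `x_{t(σ_0)}` elsewhere. -/
def code (M : MarkovSystem K N E) (j0 : N) (xp : N → K) (σ : CodeSpace E) : K :=
  if h : σ ∈ M.codeDomain j0 xp then h.2.choose else xp (M.text j0 (σ 0))

/-- `Λ ∈ E(M)`: `Λ` is a shift-invariant Borel probability measure with `Λ(D) = 1` and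
`E_Λ(1_{_1[e]} | 𝓕) = p_e ∘ F` `Λ`-a.e. for every `e ∈ E` (an equilibrium state). -/
def IsEquilibrium (M : MarkovSystem K N E) (j0 : N) (xp : N → K)
    (Λ : Measure (CodeSpace E)) : Prop :=
  IsProbabilityMeasure Λ ∧ Measure.map (shiftMap E) Λ = Λ ∧
    Λ (M.codeDomain j0 xp) = 1 ∧
    ∀ e : E,
      (Λ[Set.indicator {σ : CodeSpace E | σ 1 = some e} (fun _ => (1 : ℝ)) | pastAlgebra E])
        =ᵐ[Λ] fun σ => M.p e (M.code j0 xp σ)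

/-- `pbar` is the family of continuous extensions `p̄_e` of `p_e|_{K_{i(e)}}` to the closure
of `K_{i(e)}`, extended further by zero on `K`. -/
def IsUCExtensionP (M : MarkovSystem K N E) (pbar : E → K → ℝ) : Prop :=
  ∀ e : E, ContinuousOn (pbar e) (closure (M.Kset (M.i e))) ∧
    (∀ x ∈ M.Kset (M.i e), pbar e x = M.p e x) ∧
    (∀ x, x ∉ closure (M.Kset (M.i e)) → pbar e x = 0)

/-- `wb` is a family of continuous extensions `w̄_e` of `w_e|_{K_{i(e)}}` to the closure
of `K_{i(e)}`. -/
def IsUCExtensionW (M : MarkovSystem K N E) (wb : E → K → K) : Prop :=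
  ∀ e : E, ContinuousOn (wb e) (closure (M.Kset (M.i e))) ∧
    (∀ x ∈ M.Kset (M.i e), wb e x = M.w e x)

/-- The Markov system is uniformly continuous: each `w_e|_{K_{i(e)}}` and `p_e|_{K_{i(e)}}`
is uniformly continuous. -/
def IsUniformlyContinuous (M : MarkovSystem K N E) : Prop :=
  ∀ e : E, UniformContinuousOn (M.w e) (M.Kset (M.i e)) ∧
    UniformContinuousOn (M.p e) (M.Kset (M.i e))

/-- `∂p_e = p̄_e · 1_{cl(K_{i(e)}) \ K_{i(e)}}`. -/
def dp (M : MarkovSystem K N E) (pbar : E → K → ℝ) (e : E) : K → ℝ :=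
  Set.indicator (closure (M.Kset (M.i e)) \ M.Kset (M.i e)) (pbar e)

/-- `Λ ∈ Ẽ(M)` (asymptotic state): shift-invariant probability with `Λ(D) = 1` and
`E_Λ(1_{_1[e]} | 𝓕) = (p̄_e ∘ F)·1_{T_{i(e)}}` `Λ`-a.e. for every `e`. -/
def IsAsymptotic (M : MarkovSystem K N E) (j0 : N) (xp : N → K) (pbar : E → K → ℝ)
    (Λ : Measure (CodeSpace E)) : Prop :=
  IsProbabilityMeasure Λ ∧ Measure.map (shiftMap E) Λ = Λ ∧
    Λ (M.codeDomain j0 xp) = 1 ∧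
    ∀ e : E,
      (Λ[Set.indicator {σ : CodeSpace E | σ 1 = some e} (fun _ => (1 : ℝ)) | pastAlgebra E])
        =ᵐ[Λ] Set.indicator (M.Tset (M.i e)) (fun σ => pbar e (M.code j0 xp σ))

/-- `Λ ∈ E_⊥(M)`: shift-invariant probability with `Λ(D) = 1` and
`E_Λ(1_{_1[e]} | 𝓕) = (∂p_e ∘ F)·1_{T_{i(e)}}` `Λ`-a.e. for every `e`. -/
def IsPerp (M : MarkovSystem K N E) (j0 : N) (xp : N → K) (pbar : E → K → ℝ)
    (Λ : Measure (CodeSpace E)) : Prop :=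
  IsProbabilityMeasure Λ ∧ Measure.map (shiftMap E) Λ = Λ ∧
    Λ (M.codeDomain j0 xp) = 1 ∧
    ∀ e : E,
      (Λ[Set.indicator {σ : CodeSpace E | σ 1 = some e} (fun _ => (1 : ℝ)) | pastAlgebra E])
        =ᵐ[Λ] Set.indicator (M.Tset (M.i e)) (fun σ => M.dp pbar e (M.code j0 xp σ))

/-- `G = ⋃_{k ≥ 0} ⋃_{j ∈ N} S^{-k}(F^{-1}(K_j) ∩ T_j)`. -/
def Gset (M : MarkovSystem K N E) (j0 : N) (xp : N → K) : Set (CodeSpace E) :=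
  ⋃ (k : ℕ) (j : N), (shiftMap E)^[k] ⁻¹' ((M.code j0 xp) ⁻¹' (M.Kset j) ∩ M.Tset j)

/-- `M` is non-degenerate: for every asymptotic state `Λ` there is `i ∈ N` with
`Λ(T_i ∩ F^{-1}(K_i)) > 0`. -/
def IsNonDegenerate (M : MarkovSystem K N E) (j0 : N) (xp : N → K) (pbar : E → K → ℝ) : Prop :=
  ∀ Λ : Measure (CodeSpace E), M.IsAsymptotic j0 xp pbar Λ →
    ∃ i : N, 0 < Λ (M.Tset i ∩ (M.code j0 xp) ⁻¹' (M.Kset i))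

/-- `M` is consistent: `F(Λ) ∈ P(M)` for every asymptotic state `Λ`. -/
def IsConsistent (M : MarkovSystem K N E) (j0 : N) (xp : N → K) (pbar : E → K → ℝ) : Prop :=
  ∀ Λ : Measure (CodeSpace E), M.IsAsymptotic j0 xp pbar Λ →
    M.IsInvariantMeasure (Measure.map (M.code j0 xp) Λ)

/-- `Rf = ∑_e ∂p_e · (f ∘ w̄_e)`. -/
def Rop (M : MarkovSystem K N E) (pbar : E → K → ℝ) (wb : E → K → K)
    (f : K → ℝ≥0∞) : K → ℝ≥0∞ :=
  fun x => ∑' e : E, ENNReal.ofReal (M.dp pbar e x) * f (wb e x)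

/-- `Ω = ⋂_{n ≥ 1} {R^n 1 ≥ 1}`. -/
def OmegaSet (M : MarkovSystem K N E) (pbar : E → K → ℝ) (wb : E → K → K) : Set K :=
  ⋂ n : ℕ, {x : K | 1 ≤ (M.Rop pbar wb)^[n + 1] (fun _ => 1) x}

/-- `ξ_j = ∑_{e, i(e) = j} sup_{x ∈ K_j} p_e(x)`. -/
def xi (M : MarkovSystem K N E) (j : N) : ℝ≥0∞ :=
  ∑' e : {e : E // M.i e = j}, ⨆ x ∈ M.Kset j, ENNReal.ofReal (M.p e.val x)

/-- `M` has a dominating Markov chain: `ξ_j < ∞` for all `j ∈ N`. -/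
def HasDominatingChain (M : MarkovSystem K N E) : Prop := ∀ j : N, M.xi j ≠ ⊤

/-- `ξ_j · q_{j j'} = ∑_{e, i(e) = j, t(e) = j'} sup_{x ∈ K_j} p_e(x)`. -/
def xiq (M : MarkovSystem K N E) (j j' : N) : ℝ≥0∞ :=
  ∑' e : {e : E // M.i e = j ∧ M.t e = j'}, ⨆ x ∈ M.Kset j, ENNReal.ofReal (M.p e.val x)

/-- `c = ∑_{j'} sup_j ξ_j q_{j j'}`. -/
def cConst (M : MarkovSystem K N E) : ℝ≥0∞ := ∑' j' : N, ⨆ j : N, M.xiq j j'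

/-- `α^{x_0}_n({j}) = (1/n) ∑_{k=1}^n ((U*)^k δ_{x_0})(K_j)`. -/
def alphaMeas (M : MarkovSystem K N E) (x0 : K) (n : ℕ) (j : N) : ℝ≥0∞ :=
  (n : ℝ≥0∞)⁻¹ * ∑ k ∈ Finset.range n, (M.adjOp^[k + 1] (Measure.dirac x0)) (M.Kset j)

/-- Condition (T) at `x_0`: the sequence `(α^{x_0}_n)_n` is uniformly tight. -/
def ConditionT (M : MarkovSystem K N E) (x0 : K) : Prop :=
  ∀ ε : ℝ, 0 < ε → ∃ V : Finset N,
    ∀ n : ℕ, (∑' j : {j : N // j ∉ V}, M.alphaMeas x0 (n + 1) j.val) < ENNReal.ofReal ε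

/-- `M` is contractive with contraction rate `a`:
`∑_{e, i(e) = j} p_e(x) d(w_e x, w_e y) ≤ a·d(x, y)` on each `K_j`. -/
def IsContractive (M : MarkovSystem K N E) (a : ℝ) : Prop :=
  ∀ j : N, ∀ x ∈ M.Kset j, ∀ y ∈ M.Kset j,
    (∑' e : {e : E // M.i e = j},
        ENNReal.ofReal (M.p e.val x * dist (M.w e.val x) (M.w e.val y)))
      ≤ ENNReal.ofReal (a * dist x y)

/-- `L(x) = ∑_j d(x, x_j)·1_{K_j}(x)`. -/
def Lfun (M : MarkovSystem K N E) (xp : N → K) : K → ℝ≥0∞ :=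
  fun x => ∑' j : N, Set.indicator (M.Kset j) (fun y => ENNReal.ofReal (dist y (xp j))) x

/-- `b = sup_j sup_{x ∈ K_j} ∑_{e, i(e) = j} p_e(x)·d(w_e(x_{i(e)}), x_{t(e)})`. -/
def bConst (M : MarkovSystem K N E) (xp : N → K) : ℝ≥0∞ :=
  ⨆ j : N, ⨆ x ∈ M.Kset j,
    ∑' e : {e : E // M.i e = j},
      ENNReal.ofReal (M.p e.val x * dist (M.w e.val (xp (M.i e.val))) (xp (M.t e.val)))

/-- `P^m_x` evaluated on a word: `p_{e_0}(x)·p_{e_1}(w_{e_0}x)·⋯`. -/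
def wordProb (M : MarkovSystem K N E) : List (Option E) → K → ℝ
  | [], _ => 1
  | o :: rest, x => M.pext o x * M.wordProb rest (M.wext o x)

/-- `Λ = Φ(μ)`: `Λ` is a shift-invariant Borel probability measure with
`Λ(_m[e_m, …, e_n]) = ∫ P^m_x(_m[e_m, …, e_n]) dμ(x)` for all cylinders with `m ≤ 0`. -/
def IsPhiOf (M : MarkovSystem K N E) (μ : Measure K) (Λ : Measure (CodeSpace E)) : Prop :=
  IsProbabilityMeasure Λ ∧ Measure.map (shiftMap E) Λ = Λ ∧
    ∀ m : ℤ, m ≤ 0 → ∀ es : List (Option E),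
      Λ (cylSetL m es) = ∫⁻ x, ENNReal.ofReal (M.wordProb es x) ∂μ

/-- The (negative of the) energy function: `-u(σ) = -log p_{σ_1}(F(σ))` on `D`
(`+∞` if `p_{σ_1}(F(σ)) = 0`) and `+∞` off `D`, valued in `[0, ∞]`. -/
def negEnergy (M : MarkovSystem K N E) (j0 : N) (xp : N → K) (σ : CodeSpace E) : ℝ≥0∞ :=
  if σ ∈ M.codeDomain j0 xp then
    (σ 1).elim ⊤ fun e =>
      if M.p e (M.code j0 xp σ) = 0 then ⊤
      else ENNReal.ofReal (-Real.log (M.p e (M.code j0 xp σ)))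
  else ⊤

/-- The free energy `h_S(Λ) + ∫ u dΛ`, as an extended real number. -/
def freeEnergy (M : MarkovSystem K N E) (j0 : N) (xp : N → K)
    (Λ : Measure (CodeSpace E)) : EReal :=
  (entropyS Λ : EReal) - ((∫⁻ σ, M.negEnergy j0 xp σ ∂Λ : ℝ≥0∞) : EReal)

/-- `Λ₀ ∈ E(u)`: `Λ₀` is a thermodynamic equilibrium state for the energy function `u`. -/
def IsEquilibriumForU (M : MarkovSystem K N E) (j0 : N) (xp : N → K)
    (Λ0 : Measure (CodeSpace E)) : Prop :=
  IsProbabilityMeasure Λ0 ∧ Measure.map (shiftMap E) Λ0 = Λ0 ∧ entropyS Λ0 ≠ ⊤ ∧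
    M.freeEnergy j0 xp Λ0 =
      sSup {r : EReal | ∃ Λ : Measure (CodeSpace E),
        IsProbabilityMeasure Λ ∧ Measure.map (shiftMap E) Λ = Λ ∧ entropyS Λ ≠ ⊤ ∧
          r = M.freeEnergy j0 xp Λ}

end MarkovSystem

end

/-! One step of `U*` moves mass from `K_i` into `K_j` only along edges `e` with `i(e) = i`,
`t(e) = j`, and such an edge carries at most `sup_{K_i} p_e` of every unit of mass in `K_i`.
Hence `(U*ν)(K_j) ≤ sup_i ξ_i q_{ij} =: c_j` for every probability measure `ν`, so
`α^{x_0}_n({j}) ≤ c_j` for all `n`, and `∑_j c_j = c < ∞` makes the tails `∑_{j ∉ V} c_j`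
uniformly small. -/

namespace MarkovSystem

variable {K : Type*} [MetricSpace K] [MeasurableSpace K] {N E : Type*} (M : MarkovSystem K N E)

noncomputable def pSup (e : E) : ℝ≥0∞ := ⨆ x ∈ M.Kset (M.i e), ENNReal.ofReal (M.p e x)

lemma exists_mem_Kset (x : K) : ∃ j, x ∈ M.Kset j :=
  Set.mem_iUnion.mp (M.Kset_cover ▸ Set.mem_univ x)

lemma p_eq_zero_of_mem_Kset {x : K} {j : N} (hx : x ∈ M.Kset j) {e : E} (he : M.i e ≠ j) :
    M.p e x = 0 :=
  M.p_zero_outside e x fun hxe => Set.disjoint_left.mp (M.Kset_disjoint he) hxe hx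

lemma tsum_ofReal_p (x : K) : ∑' e : E, ENNReal.ofReal (M.p e x) = 1 := by
  obtain ⟨j, hx⟩ := M.exists_mem_Kset x
  have hsupp : Function.support (fun e => ENNReal.ofReal (M.p e x)) ⊆ {e | M.i e = j} :=
    fun e he => by_contra fun hne => he (by simp [M.p_eq_zero_of_mem_Kset hx hne])
  have hsum := M.p_tsum_one j x hx
  have hsummable : Summable fun e : {e : E // M.i e = j} => M.p e.val x :=
    by_contra fun h => by simp [tsum_eq_zero_of_not_summable h] at hsum
  rw [← tsum_subtype_eq_of_support_subset hsupp]
  change ∑' e : {e : E // M.i e = j}, ENNReal.ofReal (M.p e.val x) = 1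
  rw [← ENNReal.ofReal_tsum_of_nonneg (fun e => M.p_nonneg _ _) hsummable, hsum,
    ENNReal.ofReal_one]

lemma adjOp_apply (ν : Measure K) {s : Set K} (hs : MeasurableSet s) :
    M.adjOp ν s = ∑' e : E, ∫⁻ x in M.w e ⁻¹' s, ENNReal.ofReal (M.p e x) ∂ν := by
  simp only [adjOp, Measure.sum_apply _ hs, Measure.map_apply (M.w_measurable _) hs,
    withDensity_apply _ (M.w_measurable _ hs)]

lemma adjOp_apply_univ [Countable E] (ν : Measure K) : M.adjOp ν Set.univ = ν Set.univ := by
  rw [M.adjOp_apply ν MeasurableSet.univ]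
  simp only [Set.preimage_univ, Measure.restrict_univ]
  rw [← lintegral_tsum fun e => (M.p_measurable e).ennreal_ofReal.aemeasurable]
  simp [tsum_ofReal_p]

lemma iterate_adjOp_apply_univ [Countable E] (ν : Measure K) (k : ℕ) :
    M.adjOp^[k] ν Set.univ = ν Set.univ := by
  induction k with
  | zero => rfl
  | succ k ih => rw [Function.iterate_succ_apply', adjOp_apply_univ, ih]

lemma setLIntegral_p_le (ν : Measure K) (e : E) (s : Set K) :
    ∫⁻ x in s, ENNReal.ofReal (M.p e x) ∂ν ≤ M.pSup e * ν (M.Kset (M.i e)) := by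
  have hle : (fun x => ENNReal.ofReal (M.p e x)) ≤
      (M.Kset (M.i e)).indicator fun _ => M.pSup e := by
    intro x
    by_cases hx : x ∈ M.Kset (M.i e)
    · rw [Set.indicator_of_mem hx]
      exact le_iSup₂ (f := fun x (_ : x ∈ M.Kset (M.i e)) => ENNReal.ofReal (M.p e x)) x hx
    · simp [M.p_zero_outside e x hx]
  calc ∫⁻ x in s, ENNReal.ofReal (M.p e x) ∂ν
      ≤ ∫⁻ x, ENNReal.ofReal (M.p e x) ∂ν := setLIntegral_le_lintegral _ _
    _ ≤ ∫⁻ x, (M.Kset (M.i e)).indicator (fun _ => M.pSup e) x ∂ν := lintegral_mono hle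
    _ = M.pSup e * ν (M.Kset (M.i e)) := lintegral_indicator_const (M.Kset_measurable _) _

/-- Mass can flow along `e` only into `K_{t(e)}`. -/
lemma setLIntegral_preimage_Kset_eq_zero (ν : Measure K) {e : E} {j : N} (hj : M.t e ≠ j) :
    ∫⁻ x in M.w e ⁻¹' M.Kset j, ENNReal.ofReal (M.p e x) ∂ν = 0 := by
  have hzero :
      Set.EqOn (fun x => ENNReal.ofReal (M.p e x)) (fun _ => 0) (M.w e ⁻¹' M.Kset j) := by
    intro x hx
    have hxe : x ∉ M.Kset (M.i e) := fun hxe =>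
      Set.disjoint_left.mp (M.Kset_disjoint hj) (M.w_mapsTo e hxe) hx
    simp [M.p_zero_outside e x hxe]
  rw [setLIntegral_congr_fun (M.w_measurable e (M.Kset_measurable j)) hzero, lintegral_zero]

lemma setLIntegral_preimage_Kset_le (ν : Measure K) (e : E) (j : N) :
    ∫⁻ x in M.w e ⁻¹' M.Kset j, ENNReal.ofReal (M.p e x) ∂ν ≤
      (if M.t e = j then M.pSup e else 0) * ν (M.Kset (M.i e)) := by
  split_ifs with hj
  · exact M.setLIntegral_p_le ν e _
  · simp [M.setLIntegral_preimage_Kset_eq_zero ν hj]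

lemma xiq_eq_tsum_fiber (i j : N) :
    M.xiq i j = ∑' e : M.i ⁻¹' {i}, if M.t e = j then M.pSup e else 0 := by
  rw [xiq, tsum_subtype (M.i ⁻¹' {i}) fun e => if M.t e = j then M.pSup e else 0]
  refine (tsum_subtype {e | M.i e = i ∧ M.t e = j}
    fun e => ⨆ x ∈ M.Kset i, ENNReal.ofReal (M.p e x)).trans ?_
  refine tsum_congr fun e => ?_
  by_cases hi : M.i e = i <;> by_cases hj : M.t e = j <;> simp [pSup, hi, hj]

lemma tsum_ite_pSup_mul (ν : Measure K) (j : N) :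
    ∑' e : E, (if M.t e = j then M.pSup e else 0) * ν (M.Kset (M.i e)) =
      ∑' i : N, M.xiq i j * ν (M.Kset i) := by
  rw [← ENNReal.tsum_fiberwise _ M.i]
  refine tsum_congr fun i => ?_
  rw [M.xiq_eq_tsum_fiber, ← ENNReal.tsum_mul_right]
  refine tsum_congr fun e => ?_
  rw [show M.i e = i from e.prop]

lemma adjOp_Kset_le [Countable N] (ν : Measure K) (j : N) :
    M.adjOp ν (M.Kset j) ≤ (⨆ i, M.xiq i j) * ν Set.univ := by
  calc M.adjOp ν (M.Kset j)
      ≤ ∑' e : E, (if M.t e = j then M.pSup e else 0) * ν (M.Kset (M.i e)) := by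
        rw [M.adjOp_apply ν (M.Kset_measurable j)]
        exact ENNReal.tsum_le_tsum fun e => M.setLIntegral_preimage_Kset_le ν e j
    _ = ∑' i : N, M.xiq i j * ν (M.Kset i) := M.tsum_ite_pSup_mul ν j
    _ ≤ ∑' i : N, (⨆ i', M.xiq i' j) * ν (M.Kset i) :=
        ENNReal.tsum_le_tsum fun i => mul_le_mul_left (le_iSup (M.xiq · j) i) _
    _ = (⨆ i, M.xiq i j) * ν Set.univ := by
        rw [ENNReal.tsum_mul_left, ← measure_iUnion M.Kset_disjoint M.Kset_measurable,
          M.Kset_cover]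

lemma alphaMeas_le [Countable N] [Countable E] (x0 : K) (n : ℕ) (j : N) :
    M.alphaMeas x0 n j ≤ ⨆ i, M.xiq i j := by
  have hterm : ∀ k ∈ Finset.range n,
      M.adjOp^[k + 1] (Measure.dirac x0) (M.Kset j) ≤ ⨆ i, M.xiq i j := fun k _ => by
    have hν := M.adjOp_Kset_le (M.adjOp^[k] (Measure.dirac x0)) j
    rwa [iterate_adjOp_apply_univ, measure_univ, mul_one,
      ← Function.iterate_succ_apply' M.adjOp] at hν
  calc M.alphaMeas x0 n j ≤ (n : ℝ≥0∞)⁻¹ * (n * ⨆ i, M.xiq i j) := by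
        rw [alphaMeas]
        gcongr
        exact (Finset.sum_le_card_nsmul _ _ _ hterm).trans_eq
          (by rw [Finset.card_range, nsmul_eq_mul])
    _ ≤ ⨆ i, M.xiq i j := by
        rw [← mul_assoc]
        exact mul_le_of_le_one_left' (ENNReal.inv_mul_le_one _)

end MarkovSystem

variable {K : Type*} [MetricSpace K] [CompleteSpace K] [MeasurableSpace K] [BorelSpace K]
  {N E : Type*} [Countable N] [Countable E]

theorem conditionT_of_dominating_chain_general
    (M : MarkovSystem K N E) (hc : M.cConst ≠ ⊤) (x0 : K) :
    M.ConditionT x0 := by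
  intro ε hε
  have htail := ENNReal.tendsto_tsum_compl_atTop_zero (f := fun j => ⨆ i, M.xiq i j) hc
  obtain ⟨V, hV⟩ := (htail.eventually_lt_const (ENNReal.ofReal_pos.mpr hε)).exists
  refine ⟨V, fun n => lt_of_le_of_lt ?_ hV⟩
  exact ENNReal.tsum_le_tsum fun j => M.alphaMeas_le x0 (n + 1) j.val

/-- If `M` has a dominating Markov chain with `c < ∞`, then for every
`x₀ ∈ K` the sequence `(α^{x₀}_n)` is uniformly tight. -/
theorem conditionT_of_dominating_chain
    (M : MarkovSystem K N E) (j0 : N) (xp : N → K) (hxp : ∀ j, xp j ∈ M.Kset j)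
    (hdom : M.HasDominatingChain) (hc : M.cConst ≠ ⊤) (x0 : K) :
    M.ConditionT x0 :=
  conditionT_of_dominating_chain_general M hc x0
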